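/- Let n ≥ 1 and let I ≥ 1, δ ≥ 1 be natural numbers. Fix a ∈ ℤⁿ with |a_k| ≤ I for all k, let a′ be drawn uniformly at random from the box B((δ+1)I), and set γ = a′ − a. Then the conditional distribution of γ given the acceptance event {γ ∈ B(δI)} is exactly the uniform distribution on B(δI): for every z ∈ B(δI), P(γ = z ∣ γ ∈ B(δI)) = (2δI + 1)^{−n}. Consequently the accepted output is uniformly distributed and statistically independent of the secret a. -/

import Mathlib

/-- The sup-norm box `B(I) = {v ∈ ℤⁿ : |v k| ≤ I for all k}` as a finite set. -/
noncomputable def box (n I : ℕ) : Finset (Fin n → ℤ) :=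
  Fintype.piFinset fun _ => Finset.Icc (-(I : ℤ)) (I : ℤ)

lemma box_nonempty (n I : ℕ) : (box n I).Nonempty :=
  ⟨0, Fintype.mem_piFinset.mpr fun _ => Finset.mem_Icc.mpr
    ⟨by simp, by simp⟩⟩

lemma card_box (n I : ℕ) : (box n I).card = (2 * I + 1) ^ n := by
  simp only [box, Fintype.card_piFinset, Int.card_Icc, Finset.prod_const, Finset.card_univ,
    Fintype.card_fin]
  congr 1
  omega

lemma mem_box_iff {n I : ℕ} {v : Fin n → ℤ} :
    v ∈ box n I ↔ ∀ k, |v k| ≤ (I : ℤ) := by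
  simp [box, Fintype.mem_piFinset, abs_le, Finset.mem_Icc]

lemma add_mem_big {n I δ : ℕ} {z a : Fin n → ℤ} (hz : z ∈ box n (δ * I))
    (ha : ∀ k, |a k| ≤ (I : ℤ)) : z + a ∈ box n ((δ + 1) * I) := by
  rw [mem_box_iff] at hz ⊢
  intro k
  have h1 := hz k
  have h2 := ha k
  have := abs_add_le (z k) (a k)
  push_cast at *
  calc |(z + a) k| = |z k + a k| := rfl
    _ ≤ |z k| + |a k| := abs_add_le _ _
    _ ≤ (δ : ℤ) * I + I := by linarith
    _ = ((δ : ℤ) + 1) * I := by ring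

lemma filter_eq {n I δ : ℕ} {a : Fin n → ℤ} (ha : ∀ k, |a k| ≤ (I : ℤ)) :
    (box n ((δ + 1) * I)).filter (fun a' => a' - a ∈ box n (δ * I))
      = (box n (δ * I)).image (· + a) := by
  ext v
  simp only [Finset.mem_filter, Finset.mem_image]
  constructor
  · rintro ⟨hv, hv2⟩
    exact ⟨v - a, hv2, by abel⟩
  · rintro ⟨w, hw, rfl⟩
    refine ⟨add_mem_big hw ha, by simpa using hw⟩

/-- with `a ∈ B(I)` and `a′` uniform on `B((δ+1)I)`, set `γ = a′ - a`.
Conditioned on the acceptance event `γ ∈ B(δI)`, the distribution of `γ` is uniform on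
`B(δI)`: for every `z ∈ B(δI)`, `P(γ = z ∣ γ ∈ B(δI)) = (2δI + 1)^{-n}` (so the accepted
output is uniform, independent of the secret `a`). -/
theorem stmt_3 (n I δ : ℕ) (hn : 1 ≤ n) (hI : 1 ≤ I) (hδ : 1 ≤ δ)
    (a : Fin n → ℤ) (ha : ∀ k, |a k| ≤ (I : ℤ))
    (z : Fin n → ℤ) (hz : z ∈ box n (δ * I)) :
    (((PMF.uniformOfFinset (box n ((δ + 1) * I)) (box_nonempty n ((δ + 1) * I))).map
          (fun a' => a' - a)) z)
        / (((PMF.uniformOfFinset (box n ((δ + 1) * I)) (box_nonempty n ((δ + 1) * I))).map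
          (fun a' => a' - a)).toOuterMeasure (↑(box n (δ * I)) : Set (Fin n → ℤ)))
      = (((2 * (δ * I) + 1 : ℕ) : ENNReal) ^ n)⁻¹ := by
  set p := PMF.uniformOfFinset (box n ((δ + 1) * I)) (box_nonempty n ((δ + 1) * I)) with hp
  have hinj : Function.Injective (fun a' : Fin n → ℤ => a' - a) :=
    fun x y h => by simpa using congrArg (· + a) h
  -- numerator
  have hnum : (p.map (fun a' => a' - a)) z
      = ((box n ((δ + 1) * I)).card : ENNReal)⁻¹ := by
    have hza : z + a ∈ box n ((δ + 1) * I) := add_mem_big hz ha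
    rw [PMF.map_apply]
    refine (tsum_eq_single (z + a) ?_).trans ?_
    · intro b hb
      rw [if_neg]
      intro h
      apply hb
      have := congrArg (· + a) h.symm
      simpa using this
    · have hzz : z = z + a - a := by abel
      rw [if_pos hzz, hp]
      exact PMF.uniformOfFinset_apply_of_mem _ hza
  -- denominator
  have hden : (p.map (fun a' => a' - a)).toOuterMeasure (↑(box n (δ * I)) : Set (Fin n → ℤ))
      = ((box n (δ * I)).card : ENNReal) / ((box n ((δ + 1) * I)).card : ENNReal) := by
    classical
    rw [PMF.toOuterMeasure_map_apply, hp, PMF.toOuterMeasure_uniformOfFinset_apply]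
    congr 1
    have hfilter : (box n ((δ + 1) * I)).filter
        (· ∈ (fun a' : Fin n → ℤ => a' - a) ⁻¹' (↑(box n (δ * I)) : Set (Fin n → ℤ)))
        = (box n (δ * I)).image (· + a) := by
      rw [← filter_eq ha]
      apply Finset.filter_congr
      intro x _
      simp [Set.mem_preimage]
    rw [hfilter, Finset.card_image_of_injective _ (fun x y h => by simpa using h)]
  rw [hnum, hden, card_box, card_box]
  have hb : ((2 * ((δ + 1) * I) + 1 : ℕ) : ENNReal) ^ n ≠ 0 := by positivity
  have ht : ((2 * ((δ + 1) * I) + 1 : ℕ) : ENNReal) ^ n ≠ ⊤ :=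
    ENNReal.pow_ne_top (ENNReal.natCast_ne_top _)
  rw [Nat.cast_pow, Nat.cast_pow]
  rw [div_eq_mul_inv, ENNReal.inv_div (Or.inl ht) (Or.inl hb), div_eq_mul_inv,
    ← mul_assoc, ENNReal.inv_mul_cancel hb ht, one_mul]
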